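/- arXiv:2211.10773 — 3 statements merged into one kernel-verified Lean document; each statement's English description precedes it below -/
import Mathlib

section
/- Suppose μ has full support on X, η is (α,L)-smooth, x ∈ X with μ({x}) = 0, p ∈ (0,1), and for all r with 0 < r ≤ r(x;p) we have η(B(x,r)) - 1/2 ≥ Δ for some Δ > 0. Then η(x) > 1/2. -/
/-! Smoothness bounds `η` on the closed ball `B(x, r)` by `η x + L μ(B(x, r))^α`, hence so is the
conditional mean of `η` over that ball. Since `μ {x} = 0`, continuity from above makes `μ(B(x, r))`
arbitrarily small for small `r > 0`: below `p`, which forces `r ≤ r(x;p)`, and small enough that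
`L μ(B(x, r))^α < Δ`. The hypothesis at that radius then gives
`1/2 + Δ ≤ η x + L μ(B(x, r))^α < η x + Δ`. -/

open MeasureTheory Metric Set

/-- Conditional mean of `η` over a set `S` under `μ`. -/
noncomputable def condMean {X : Type*} [MeasurableSpace X]
    (μ : Measure X) (η : X → ℝ) (S : Set X) : ℝ :=
  (∫ y in S, η y ∂μ) / (μ S).toReal

/-- Probability radius `r(x;p)`. -/
noncomputable def probRadius {X : Type*} [MetricSpace X] [MeasurableSpace X]
    (μ : Measure X) (x : X) (p : ℝ) : ℝ :=
  sInf {r : ℝ | p ≤ (μ (closedBall x r)).toReal}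

/-- `(α, L)`-smoothness of the conditional probability function. -/
def SmoothCond {X : Type*} [MetricSpace X] [MeasurableSpace X]
    (μ : Measure X) (η : X → ℝ) (α L : ℝ) : Prop :=
  ∀ x x' : X, |η x - η x'| ≤ L * (μ (ball x (dist x x'))).toReal ^ α

/-- The positive part of the effective interior. -/
def effIntPlus {X : Type*} [MetricSpace X] [MeasurableSpace X]
    (μ : Measure X) (η : X → ℝ) (p Δ : ℝ) : Set X :=
  {x | 1/2 < η x ∧ ∀ r, 0 < r → r ≤ probRadius μ x p →
    Δ ≤ condMean μ η (closedBall x r) - 1/2}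

/-- The negative part of the effective interior. -/
def effIntMinus {X : Type*} [MetricSpace X] [MeasurableSpace X]
    (μ : Measure X) (η : X → ℝ) (p Δ : ℝ) : Set X :=
  {x | η x < 1/2 ∧ ∀ r, 0 < r → r ≤ probRadius μ x p →
    Δ ≤ 1/2 - condMean μ η (closedBall x r)}

/-- The effective decision boundary. -/
def effBoundary {X : Type*} [MetricSpace X] [MeasurableSpace X]
    (μ : Measure X) (η : X → ℝ) (p Δ : ℝ) : Set X :=
  (effIntPlus μ η p Δ ∪ effIntMinus μ η p Δ)ᶜ

open Filter Topology

section MeasureOfBalls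

variable {X : Type*} [MetricSpace X] [MeasurableSpace X] (μ : Measure X) [IsFiniteMeasure μ]

theorem tendsto_measure_closedBall_nhdsGT_zero [OpensMeasurableSpace X] (x : X) :
    Tendsto (fun r => (μ (closedBall x r)).toReal) (𝓝[>] 0) (𝓝 (μ {x}).toReal) := by
  have hball : Tendsto (μ ∘ closedBall x) (𝓝[>] 0) (𝓝 (μ (⋂ r > 0, closedBall x r))) :=
    tendsto_measure_biInter_gt (fun _ _ => measurableSet_closedBall.nullMeasurableSet)
      (fun _ _ _ hij => closedBall_subset_closedBall hij) ⟨1, one_pos, measure_ne_top μ _⟩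
  rw [biInter_gt_closedBall, closedBall_zero] at hball
  exact (ENNReal.tendsto_toReal (measure_ne_top μ _)).comp hball

theorem tendsto_measure_closedBall_atTop (x : X) :
    Tendsto (fun r => (μ (closedBall x r)).toReal) atTop (𝓝 (μ univ).toReal) := by
  have hball : Tendsto (μ ∘ closedBall x) atTop (𝓝 (μ (⋃ r : ℝ, closedBall x r))) :=
    tendsto_measure_iUnion_atTop fun _ _ hrs => closedBall_subset_closedBall hrs
  rw [iUnion_eq_univ_iff.2 fun y => ⟨dist y x, mem_closedBall.2 le_rfl⟩] at hball
  exact (ENNReal.tendsto_toReal (measure_ne_top μ _)).comp hball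

end MeasureOfBalls

theorem le_probRadius {X : Type*} [MetricSpace X] [MeasurableSpace X] (μ : Measure X)
    [IsProbabilityMeasure μ] {x : X} {p r : ℝ} (hp : p < 1)
    (hr : (μ (closedBall x r)).toReal < p) : r ≤ probRadius μ x p := by
  have hlarge : ∀ᶠ s in atTop, p < (μ (closedBall x s)).toReal := by
    have hball := tendsto_measure_closedBall_atTop μ x
    rw [measure_univ, ENNReal.toReal_one] at hball
    exact hball.eventually (lt_mem_nhds hp)
  refine le_csInf (hlarge.exists.imp fun _ => le_of_lt) fun s hs => ?_
  by_contra! hsr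
  have hmono : (μ (closedBall x s)).toReal ≤ (μ (closedBall x r)).toReal :=
    measureReal_mono (closedBall_subset_closedBall hsr.le)
  exact (hs.trans hmono).not_gt hr

theorem condMean_le_of_forall_le {X : Type*} [MeasurableSpace X] {μ : Measure X} {f : X → ℝ}
    {S : Set X} {c : ℝ} (hS : MeasurableSet S) (hμS : μ S ≠ 0) (hμS' : μ S ≠ ⊤)
    (hf : IntegrableOn f S μ) (hfc : ∀ y ∈ S, f y ≤ c) : condMean μ f S ≤ c := by
  have hint := setIntegral_mono_on hf (integrableOn_const hμS') hS hfc
  rw [setIntegral_const, smul_eq_mul, mul_comm] at hint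
  exact (div_le_iff₀ (ENNReal.toReal_pos hμS hμS')).2 hint

theorem SmoothCond.le_add_of_mem_closedBall {X : Type*} [MetricSpace X] [MeasurableSpace X]
    {μ : Measure X} [IsFiniteMeasure μ] {η : X → ℝ} {α L : ℝ} (hη : SmoothCond μ η α L)
    (hα : 0 ≤ α) (hL : 0 ≤ L) {x y : X} {r : ℝ} (hy : y ∈ closedBall x r) :
    η y ≤ η x + L * (μ (closedBall x r)).toReal ^ α := by
  have hsub : ball x (dist x y) ⊆ closedBall x r :=
    ball_subset_closedBall.trans (closedBall_subset_closedBall (dist_comm x y ▸ hy))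
  have hball : L * (μ (ball x (dist x y))).toReal ^ α ≤ L * (μ (closedBall x r)).toReal ^ α :=
    mul_le_mul_of_nonneg_left (Real.rpow_le_rpow measureReal_nonneg (measureReal_mono hsub) hα) hL
  linarith [neg_abs_le (η x - η y), hη x y]

/-- If μ has full support, η is (α,L)-smooth, μ{x}=0, and the local conditional means on all
balls of radius up to the probability radius are at least 1/2 + Δ, then η(x) > 1/2. -/
theorem stmt3 {X : Type*} [MetricSpace X] [MeasurableSpace X] [BorelSpace X]
    (μ : Measure X) [IsProbabilityMeasure μ] [μ.IsOpenPosMeasure]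
    (η : X → ℝ) (hmeas : Measurable η) (hrange : ∀ x, η x ∈ Set.Icc (0:ℝ) 1)
    (α L : ℝ) (hα : 0 < α) (hL : 0 < L) (hsmooth : SmoothCond μ η α L)
    (x : X) (hx : μ {x} = 0) (p : ℝ) (hp : p ∈ Set.Ioo (0:ℝ) 1)
    (Δ : ℝ) (hΔ : 0 < Δ)
    (h : ∀ r, 0 < r → r ≤ probRadius μ x p → Δ ≤ condMean μ η (closedBall x r) - 1/2) :
    1/2 < η x := by
  have hsmall := tendsto_measure_closedBall_nhdsGT_zero μ x
  rw [hx, ENNReal.toReal_zero] at hsmall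
  have hmodulus : Tendsto (fun r => L * (μ (closedBall x r)).toReal ^ α) (𝓝[>] 0) (𝓝 0) := by
    simpa [Real.zero_rpow hα.ne'] using
      ((Real.continuousAt_rpow_const 0 α (Or.inr hα.le)).tendsto.comp hsmall).const_mul L
  obtain ⟨r, hr, hrp, hrΔ⟩ := (eventually_mem_nhdsWithin.and
    ((hsmall.eventually (gt_mem_nhds hp.1)).and (hmodulus.eventually (gt_mem_nhds hΔ)))).exists
  have hint : Integrable η μ := .of_bound hmeas.aestronglyMeasurable 1
    (.of_forall fun y => (Real.norm_of_nonneg (hrange y).1).trans_le (hrange y).2)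
  have hmean : condMean μ η (closedBall x r) ≤ η x + L * (μ (closedBall x r)).toReal ^ α :=
    condMean_le_of_forall_le measurableSet_closedBall (measure_closedBall_pos μ x hr).ne'
      (measure_ne_top μ _) hint.integrableOn
      fun y hy => hsmooth.le_add_of_mem_closedBall hα.le hL.le hy
  linarith [h r hr (le_probRadius μ hp.2 hrp)]
end

section
/- If μ satisfies the β-margin condition with constant C and η is (α,L)-smooth, then the effective boundary satisfies μ(∂_{p,Δ}) ≤ C·(Δ + L·p^α)^β for all p ∈ (0,1) and Δ > 0. -/
open MeasureTheory Metric Set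

/-! For radii `r ≤ r(x;p)` the open ball `B°(x,r)` has mass at most `p`, so smoothness puts `η` on
the closed ball `B(x,r)` within `L p^α` of `η x`, and hence also its conditional mean. A point with
`|η x - 1/2| > Δ + L p^α` therefore lies in the effective interior, and the margin condition at
`t = Δ + L p^α` bounds the measure of the rest. -/

theorem abs_condMean_sub_le {X : Type*} [MeasurableSpace X] {μ : Measure X} [IsFiniteMeasure μ]
    {f : X → ℝ} (hf : AEStronglyMeasurable f μ)
    {S : Set X} (hS : MeasurableSet S) (hμS : μ S ≠ 0) {c ε : ℝ}
    (hfS : ∀ y ∈ S, |f y - c| ≤ ε) : |condMean μ f S - c| ≤ ε := by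
  have hμS' : 0 < μ.real S := ENNReal.toReal_pos hμS (measure_ne_top μ S)
  have hint : IntegrableOn f S μ :=
    Measure.integrableOn_of_bounded (M := |c| + ε) (measure_ne_top μ S) hf
      ((ae_restrict_iff' hS).2 (ae_of_all _ fun y hy => (Real.norm_eq_abs _).trans_le
        (by linarith [abs_sub_abs_le_abs_sub (f y) c, hfS y hy])))
  have hdiff : condMean μ f S - c = (∫ y in S, (f y - c) ∂μ) / μ.real S := by
    rw [integral_sub hint (integrableOn_const (measure_ne_top μ S)), setIntegral_const,
      smul_eq_mul, condMean, ← measureReal_def]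
    field_simp
  rw [hdiff, abs_div, abs_of_pos hμS', div_le_iff₀ hμS']
  exact norm_setIntegral_le_of_norm_le_const (measure_lt_top μ S) fun y hy =>
    (Real.norm_eq_abs _).trans_le (hfS y hy)

section

variable {X : Type*} [MetricSpace X] [MeasurableSpace X] {μ : Measure X} {η : X → ℝ}
  {α L p : ℝ}

theorem measure_ball_le_of_le_probRadius [IsFiniteMeasure μ] {x : X} {r : ℝ} (hp : 0 < p)
    (hr : r ≤ probRadius μ x p) : μ.real (ball x r) ≤ p := by
  have hbdd : BddBelow {r : ℝ | p ≤ μ.real (closedBall x r)} := by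
    refine ⟨0, fun s (hs : p ≤ μ.real (closedBall x s)) => le_of_not_gt fun hs0 => ?_⟩
    rw [closedBall_eq_empty.2 hs0, measureReal_empty] at hs
    linarith
  have hclosedBall : ∀ r' < r, μ (closedBall x r') ≤ ENNReal.ofReal p := fun r' hr' =>
    (ENNReal.le_ofReal_iff_toReal_le (measure_ne_top _ _) hp.le).2
      (not_le.1 (notMem_of_lt_csInf (s := {r | p ≤ μ.real (closedBall x r)}) (hr'.trans_le hr)
        hbdd)).le
  refine ENNReal.toReal_le_of_le_ofReal hp.le ?_
  calc μ (ball x r) = μ (⋃ r' : Iio r, closedBall x r') := by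
        rw [← biUnion_lt_closedBall, iUnion_subtype]; rfl
    _ = ⨆ r' : Iio r, μ (closedBall x r') :=
        Monotone.measure_iUnion fun a b hab => closedBall_subset_closedBall hab
    _ ≤ ENNReal.ofReal p := iSup_le fun r' => hclosedBall r' r'.2

theorem SmoothCond.abs_sub_le_of_mem_closedBall (h : SmoothCond μ η α L) (hα : 0 ≤ α)
    (hL : 0 ≤ L) [IsFiniteMeasure μ] {x y : X} {r : ℝ} (hy : y ∈ closedBall x r)
    (hball : μ.real (ball x r) ≤ p) : |η y - η x| ≤ L * p ^ α := by
  rw [abs_sub_comm]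
  calc |η x - η y| ≤ L * μ.real (ball x (dist x y)) ^ α := h x y
    _ ≤ L * p ^ α := by
      gcongr
      exact (measureReal_mono (ball_subset_ball (mem_closedBall'.1 hy))).trans hball

variable [BorelSpace X] [IsFiniteMeasure μ] [μ.IsOpenPosMeasure]

theorem abs_condMean_closedBall_sub_le (hmeas : Measurable η) (h : SmoothCond μ η α L)
    (hα : 0 ≤ α) (hL : 0 ≤ L) (hp : 0 < p) {x : X} {r : ℝ} (hr : 0 < r)
    (hrp : r ≤ probRadius μ x p) : |condMean μ η (closedBall x r) - η x| ≤ L * p ^ α :=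
  abs_condMean_sub_le hmeas.aestronglyMeasurable measurableSet_closedBall
    (measure_closedBall_pos μ x hr).ne'
    fun _ hy => h.abs_sub_le_of_mem_closedBall hα hL hy (measure_ball_le_of_le_probRadius hp hrp)

theorem effBoundary_subset_abs_sub_half_le (hmeas : Measurable η) (h : SmoothCond μ η α L)
    (hα : 0 ≤ α) (hL : 0 ≤ L) (hp : 0 < p) {Δ : ℝ} (hΔ : 0 ≤ Δ) :
    effBoundary μ η p Δ ⊆ {x | |η x - 1/2| ≤ Δ + L * p ^ α} := by
  refine fun x hx => (le_of_not_gt fun hfar => ?_ : |η x - 1/2| ≤ Δ + L * p ^ α)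
  have hclose (r : ℝ) (hr : 0 < r) (hrp : r ≤ probRadius μ x p) :=
    abs_le.1 (abs_condMean_closedBall_sub_le hmeas h hα hL hp hr hrp)
  have hLp : 0 ≤ L * p ^ α := by positivity
  rcases lt_abs.1 hfar with hfar | hfar
  · exact hx (Or.inl ⟨by linarith, fun r hr hrp => by linarith [(hclose r hr hrp).1]⟩)
  · exact hx (Or.inr ⟨by linarith, fun r hr hrp => by linarith [(hclose r hr hrp).2]⟩)

end

theorem stmt10_general {X : Type*} [MetricSpace X] [MeasurableSpace X] [BorelSpace X]
    (μ : Measure X) [IsProbabilityMeasure μ] [μ.IsOpenPosMeasure]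
    (η : X → ℝ) (hmeas : Measurable η)
    (α L : ℝ) (hα : 0 < α) (hL : 0 < L) (hsmooth : SmoothCond μ η α L)
    (C β : ℝ)
    (hmargin : ∀ t : ℝ, 0 ≤ t → (μ {x | |η x - 1/2| ≤ t}).toReal ≤ C * t ^ β)
    (p Δ : ℝ) (hp : p ∈ Set.Ioo (0:ℝ) 1) (hΔ : 0 < Δ) :
    (μ (effBoundary μ η p Δ)).toReal ≤ C * (Δ + L * p ^ α) ^ β :=
  calc (μ (effBoundary μ η p Δ)).toReal
      ≤ (μ {x | |η x - 1/2| ≤ Δ + L * p ^ α}).toReal := measureReal_mono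
        (effBoundary_subset_abs_sub_half_le hmeas hsmooth hα.le hL.le hp.1 hΔ.le)
    _ ≤ C * (Δ + L * p ^ α) ^ β := hmargin _ (by have := hp.1; positivity)

/-- Under the β-margin condition and (α,L)-smoothness, the measure of the effective boundary is
bounded by C(Δ + L p^α)^β. -/
theorem stmt10 {X : Type*} [MetricSpace X] [MeasurableSpace X] [BorelSpace X]
    (μ : Measure X) [IsProbabilityMeasure μ] [μ.IsOpenPosMeasure]
    (η : X → ℝ) (hmeas : Measurable η) (hrange : ∀ x, η x ∈ Set.Icc (0:ℝ) 1)
    (α L : ℝ) (hα : 0 < α) (hL : 0 < L) (hsmooth : SmoothCond μ η α L)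
    (C β : ℝ) (hC : 0 < C) (hβ : 0 < β)
    (hmargin : ∀ t : ℝ, 0 ≤ t → (μ {x | |η x - 1/2| ≤ t}).toReal ≤ C * t ^ β)
    (p Δ : ℝ) (hp : p ∈ Set.Ioo (0:ℝ) 1) (hΔ : 0 < Δ) :
    (μ (effBoundary μ η p Δ)).toReal ≤ C * (Δ + L * p ^ α) ^ β :=
  stmt10_general μ η hmeas α L hα hL hsmooth C β hmargin p Δ hp hΔ
end

section
/- Suppose (X, ρ, μ) satisfies the Lebesgue Differentiation Theorem conclusion for η, i.e., the set X_null := {x : lim_{r↓0} η(B(x,r)) ≠ η(x)} has μ-measure 0. Let p_m ↓ 0 and Δ_m ↓ 0 be decreasing sequences. Then μ(∂_{p_m, Δ_m} \ ∂_0) → 0 as m → ∞, where ∂_0 := {x : η(x) = 1/2}. -/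
open MeasureTheory Metric Set Filter Topology
set_option linter.unusedSectionVars false

section Aux
variable {X : Type*} [MetricSpace X] [MeasurableSpace X] [BorelSpace X]
  {μ : Measure X} [IsFiniteMeasure μ]

/-- continuity from above for closed balls. -/
lemma tendsto_cb (κ : Measure X) [IsFiniteMeasure κ] (x : X) (t : ℝ) :
    Tendsto (fun n : ℕ => κ (closedBall x (t + 1/(n+1)))) atTop
      (𝓝 (κ (closedBall x t))) := by
  have hI : ⋂ n : ℕ, closedBall x (t + 1/(n+1)) = closedBall x t := by
    apply Subset.antisymm
    · intro y hy
      simp only [mem_iInter, mem_closedBall] at hy ⊢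
      have : Tendsto (fun n : ℕ => t + 1/((n:ℝ)+1)) atTop (𝓝 (t + 0)) :=
        tendsto_const_nhds.add tendsto_one_div_add_atTop_nhds_zero_nat
      rw [add_zero] at this
      exact ge_of_tendsto this (Eventually.of_forall hy)
    · intro y hy
      simp only [mem_iInter, mem_closedBall] at hy ⊢
      intro n
      have : (0:ℝ) < 1/(n+1) := by positivity
      linarith
  have := tendsto_measure_iInter_atTop (μ := κ)
    (s := fun n : ℕ => closedBall x (t + 1/(n+1)))
    (fun n => (measurableSet_closedBall).nullMeasurableSet)
    (fun m n hmn => by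
      apply closedBall_subset_closedBall
      have : (1:ℝ)/(n+1) ≤ 1/(m+1) := by
        apply one_div_le_one_div_of_le (by positivity)
        have := (Nat.cast_le (α := ℝ)).2 hmn
        linarith
      linarith)
    ⟨0, measure_ne_top _ _⟩
  rwa [hI] at this

lemma tendsto_cb_toReal (κ : Measure X) [IsFiniteMeasure κ] (x : X) (t : ℝ) :
    Tendsto (fun n : ℕ => (κ (closedBall x (t + 1/(n+1)))).toReal) atTop
      (𝓝 ((κ (closedBall x t)).toReal)) :=
  (ENNReal.tendsto_toReal (measure_ne_top _ _)).comp (tendsto_cb κ x t)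

lemma measurable_cb_rho (κ : Measure X) [IsFiniteMeasure κ] {ρ : X → ℝ}
    (hρ : ∀ x x', ρ x' ≤ ρ x + dist x x') :
    Measurable (fun x => (κ (closedBall x (ρ x))).toReal) := by
  apply UpperSemicontinuous.measurable
  intro x y hy
  obtain ⟨n, hn⟩ : ∃ n : ℕ, (κ (closedBall x (ρ x + 1/(n+1)))).toReal < y :=
    ((tendsto_cb_toReal κ x (ρ x)).eventually_lt_const hy).exists
  rw [Metric.eventually_nhds_iff]
  refine ⟨1/(2*(n+1)), by positivity, fun x' hx' => ?_⟩
  have hsub : closedBall x' (ρ x') ⊆ closedBall x (ρ x + 1/(n+1)) := by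
    intro z hz
    rw [mem_closedBall] at hz ⊢
    have h1 := hρ x x'
    have h2 : dist x' x < 1/(2*(n+1)) := hx'
    have h3 : dist z x ≤ dist z x' + dist x' x := dist_triangle z x' x
    have h4 : dist x x' = dist x' x := dist_comm x x'
    have : (1:ℝ)/(2*(n+1)) + 1/(2*(n+1)) = 1/(n+1) := by
      have hn1 : ((n:ℝ)+1) ≠ 0 := by positivity
      field_simp
      norm_num
    nlinarith [dist_nonneg (x := z) (y := x')]
  calc (κ (closedBall x' (ρ x'))).toReal
      ≤ (κ (closedBall x (ρ x + 1/(n+1)))).toReal :=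
        ENNReal.toReal_mono (measure_ne_top _ _) (measure_mono hsub)
    _ < y := hn

variable {η : X → ℝ}

lemma nu_finite (hrange : ∀ x, η x ∈ Set.Icc (0:ℝ) 1) :
    IsFiniteMeasure (μ.withDensity (fun y => ENNReal.ofReal (η y))) := by
  constructor
  rw [withDensity_apply _ MeasurableSet.univ]
  calc ∫⁻ y in Set.univ, ENNReal.ofReal (η y) ∂μ
      ≤ ∫⁻ _ in Set.univ, 1 ∂μ := by
        apply lintegral_mono
        intro y
        exact ENNReal.ofReal_le_one.2 (hrange y).2
    _ = μ Set.univ := by simp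
    _ < ⊤ := measure_lt_top μ _

lemma condMean_eq (hmeas : Measurable η) (hrange : ∀ x, η x ∈ Set.Icc (0:ℝ) 1)
    {S : Set X} (hS : MeasurableSet S) :
    condMean μ η S
      = ((μ.withDensity (fun y => ENNReal.ofReal (η y))) S).toReal / (μ S).toReal := by
  unfold condMean
  congr 1
  rw [withDensity_apply _ hS,
    integral_eq_lintegral_of_nonneg_ae (Eventually.of_forall (fun y => (hrange y).1))
      (hmeas.aestronglyMeasurable)]

lemma measurable_condMean_rho (hmeas : Measurable η)
    (hrange : ∀ x, η x ∈ Set.Icc (0:ℝ) 1) {ρ : X → ℝ}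
    (hρ : ∀ x x', ρ x' ≤ ρ x + dist x x') :
    Measurable (fun x => condMean μ η (closedBall x (ρ x))) := by
  haveI := nu_finite (μ := μ) hrange
  have : (fun x => condMean μ η (closedBall x (ρ x)))
      = fun x => ((μ.withDensity (fun y => ENNReal.ofReal (η y)))
          (closedBall x (ρ x))).toReal / (μ (closedBall x (ρ x))).toReal := by
    funext x
    exact condMean_eq hmeas hrange measurableSet_closedBall
  rw [this]
  exact (measurable_cb_rho _ hρ).div (measurable_cb_rho μ hρ)

section PR
variable [IsProbabilityMeasure μ]

lemma pr_set_nonempty (x : X) {p : ℝ} (hp1 : p < 1) :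
    {r : ℝ | p ≤ (μ (closedBall x r)).toReal}.Nonempty := by
  have hu : ⋃ n : ℕ, closedBall x n = Set.univ := by
    ext y
    simp only [mem_iUnion, mem_closedBall, mem_univ, iff_true]
    obtain ⟨n, hn⟩ := exists_nat_ge (dist y x)
    exact ⟨n, hn⟩
  have hmono : Monotone (fun n : ℕ => closedBall x n) := fun m n h =>
    closedBall_subset_closedBall (Nat.cast_le.2 h)
  have ht : Tendsto (fun n : ℕ => μ (closedBall x n)) atTop (𝓝 (μ Set.univ)) := by
    have := tendsto_measure_iUnion_atTop (μ := μ) hmono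
    rwa [hu] at this
  have ht2 : Tendsto (fun n : ℕ => (μ (closedBall x n)).toReal) atTop (𝓝 1) := by
    have : (μ Set.univ).toReal = 1 := by simp
    rw [← this]
    exact (ENNReal.tendsto_toReal (measure_ne_top _ _)).comp ht
  obtain ⟨n, hn⟩ := (ht2.eventually_const_lt hp1).exists
  exact ⟨n, le_of_lt hn⟩

lemma pr_bddBelow (x : X) {p : ℝ} (hp0 : 0 < p) :
    BddBelow {r : ℝ | p ≤ (μ (closedBall x r)).toReal} := by
  refine ⟨0, fun r hr => ?_⟩
  by_contra h
  push_neg at h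
  rw [mem_setOf_eq, closedBall_eq_empty.2 h] at hr
  simp at hr
  linarith

lemma pr_nonneg (x : X) {p : ℝ} (hp0 : 0 < p) : 0 ≤ probRadius μ x p := by
  rcases {r : ℝ | p ≤ (μ (closedBall x r)).toReal}.eq_empty_or_nonempty with h | h
  · unfold probRadius; rw [h]; simp [Real.sInf_empty]
  · exact le_csInf h (fun r hr => by
      by_contra hc
      push_neg at hc
      rw [mem_setOf_eq, closedBall_eq_empty.2 hc] at hr
      simp at hr
      linarith)

lemma pr_le {x : X} {p r : ℝ} (hp0 : 0 < p) (hr : p ≤ (μ (closedBall x r)).toReal) :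
    probRadius μ x p ≤ r :=
  csInf_le (pr_bddBelow x hp0) hr

/-- `p ≤ μ(closedBall x (probRadius x p))` : the probability radius achieves mass `p`. -/
lemma pr_mem (x : X) {p : ℝ} (hp0 : 0 < p) (hp1 : p < 1) :
    p ≤ (μ (closedBall x (probRadius μ x p))).toReal := by
  set R := probRadius μ x p with hR
  have key : ∀ n : ℕ, p ≤ (μ (closedBall x (R + 1/(n+1)))).toReal := by
    intro n
    obtain ⟨s, hs, hslt⟩ := (csInf_lt_iff (pr_bddBelow x hp0) (pr_set_nonempty x hp1)).1
      (show sInf {r : ℝ | p ≤ (μ (closedBall x r)).toReal} < R + 1/(n+1) by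
        show probRadius μ x p < R + 1/(n+1)
        have : (0:ℝ) < 1/(n+1) := by positivity
        rw [← hR]; linarith)
    exact le_trans hs (ENNReal.toReal_mono (measure_ne_top _ _)
      (measure_mono (closedBall_subset_closedBall (le_of_lt hslt))))
  exact ge_of_tendsto (tendsto_cb_toReal μ x R) (Eventually.of_forall key)

lemma pr_mono {x : X} {p p' : ℝ} (hp0 : 0 < p') (hp' : p' ≤ p) (hp1 : p < 1) :
    probRadius μ x p' ≤ probRadius μ x p := by
  apply csInf_le_csInf (pr_bddBelow x hp0) (pr_set_nonempty x hp1)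
  intro r hr
  exact le_trans hp' hr

lemma pr_lip {p : ℝ} (hp0 : 0 < p) (hp1 : p < 1) (x x' : X) :
    probRadius μ x' p ≤ probRadius μ x p + dist x x' := by
  apply pr_le hp0
  have : closedBall x (probRadius μ x p) ⊆ closedBall x' (probRadius μ x p + dist x x') := by
    intro z hz
    rw [mem_closedBall] at hz ⊢
    have := dist_triangle z x x'
    have := dist_comm x x'
    linarith [dist_triangle z x x', dist_comm x' x ▸ le_refl (dist x' x)]
  exact le_trans (pr_mem x hp0 hp1) (ENNReal.toReal_mono (measure_ne_top _ _)
    (measure_mono this))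

lemma pr_measurable {p : ℝ} (hp0 : 0 < p) (hp1 : p < 1) :
    Measurable (fun x => probRadius μ x p) := by
  have : LipschitzWith 1 (fun x => probRadius μ x p) := by
    apply LipschitzWith.of_dist_le_mul
    intro x y
    rw [Real.dist_eq, NNReal.coe_one, one_mul, abs_le]
    constructor
    · have := pr_lip (μ := μ) hp0 hp1 x y
      linarith
    · have := pr_lip (μ := μ) hp0 hp1 y x
      rw [dist_comm] at this
      linarith
  exact this.continuous.measurable

end PR

section Main
variable [IsProbabilityMeasure μ] [μ.IsOpenPosMeasure]

lemma squeeze_cb (κ : Measure X) [IsFiniteMeasure κ] (x : X) (r : ℝ) (rn : ℕ → ℝ)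
    (h1 : ∀ n, r ≤ rn n) (h2 : ∀ n, rn n ≤ r + 1/(n+1)) :
    Tendsto (fun n => (κ (closedBall x (rn n))).toReal) atTop
      (𝓝 ((κ (closedBall x r)).toReal)) := by
  apply tendsto_of_tendsto_of_tendsto_of_le_of_le tendsto_const_nhds
    (tendsto_cb_toReal κ x r)
  · intro n
    exact ENNReal.toReal_mono (measure_ne_top _ _)
      (measure_mono (closedBall_subset_closedBall (h1 n)))
  · intro n
    exact ENNReal.toReal_mono (measure_ne_top _ _)
      (measure_mono (closedBall_subset_closedBall (h2 n)))

lemma tendsto_condMean (hmeas : Measurable η) (hrange : ∀ x, η x ∈ Set.Icc (0:ℝ) 1)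
    (x : X) {r : ℝ} (hr : 0 < r) (rn : ℕ → ℝ)
    (h1 : ∀ n, r ≤ rn n) (h2 : ∀ n, rn n ≤ r + 1/(n+1)) :
    Tendsto (fun n => condMean μ η (closedBall x (rn n))) atTop
      (𝓝 (condMean μ η (closedBall x r))) := by
  haveI := nu_finite (μ := μ) hrange
  have heq : ∀ s : ℝ, condMean μ η (closedBall x s)
      = ((μ.withDensity (fun y => ENNReal.ofReal (η y))) (closedBall x s)).toReal
        / (μ (closedBall x s)).toReal :=
    fun s => condMean_eq hmeas hrange measurableSet_closedBall
  simp only [heq]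
  apply Tendsto.div (squeeze_cb _ x r rn h1 h2) (squeeze_cb μ x r rn h1 h2)
  exact ne_of_gt (ENNReal.toReal_pos (ne_of_gt (measure_closedBall_pos μ x hr))
    (measure_ne_top _ _))

lemma measurable_effSet (hmeas : Measurable η) (hrange : ∀ x, η x ∈ Set.Icc (0:ℝ) 1)
    {p : ℝ} (hp0 : 0 < p) (hp1 : p < 1) {C : Set ℝ} (hC : IsClosed C) :
    MeasurableSet {x | ∀ r, 0 < r → r ≤ probRadius μ x p →
      condMean μ η (closedBall x r) ∈ C} := by
  have hkey : {x | ∀ r, 0 < r → r ≤ probRadius μ x p →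
        condMean μ η (closedBall x r) ∈ C}
      = (⋂ q : ℚ, {x | 0 < (q:ℝ) → (q:ℝ) ≤ probRadius μ x p →
            condMean μ η (closedBall x (q:ℝ)) ∈ C})
        ∩ {x | 0 < probRadius μ x p →
            condMean μ η (closedBall x (probRadius μ x p)) ∈ C} := by
    ext x
    simp only [mem_setOf_eq, mem_inter_iff, mem_iInter]
    constructor
    · intro hx
      exact ⟨fun q hq hqR => hx q hq hqR, fun hR => hx _ hR le_rfl⟩
    · rintro ⟨hrat, hinf⟩ r hr hrR
      rcases eq_or_lt_of_le hrR with heq | hlt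
      · rw [heq]
        exact hinf (heq ▸ hr)
      · have hchoice : ∀ n : ℕ, ∃ q : ℚ, r < q ∧
            (q:ℝ) < min (probRadius μ x p) (r + 1/(n+1)) := by
          intro n
          apply exists_rat_btwn
          rw [lt_min_iff]
          have h1n : (0:ℝ) < 1/(n+1) := by positivity
          exact ⟨hlt, by linarith⟩
        choose q hq1 hq2 using hchoice
        have hmem : ∀ n, condMean μ η (closedBall x (q n : ℝ)) ∈ C := by
          intro n
          exact hrat (q n) (lt_trans hr (hq1 n))
            (le_of_lt (lt_of_lt_of_le (hq2 n) (min_le_left _ _)))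
        have htend := tendsto_condMean (μ := μ) hmeas hrange x hr (fun n => (q n : ℝ))
          (fun n => le_of_lt (hq1 n))
          (fun n => le_of_lt (lt_of_lt_of_le (hq2 n) (min_le_right _ _)))
        exact hC.mem_of_tendsto htend (Eventually.of_forall hmem)
  rw [hkey]
  have hRmeas : Measurable (fun x => probRadius μ x p) := pr_measurable hp0 hp1
  apply MeasurableSet.inter
  · apply MeasurableSet.iInter
    intro q
    by_cases hq : 0 < (q:ℝ)
    · have : {x : X | 0 < (q:ℝ) → (q:ℝ) ≤ probRadius μ x p →
          condMean μ η (closedBall x (q:ℝ)) ∈ C}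
        = {x : X | (q:ℝ) ≤ probRadius μ x p}ᶜ
          ∪ (fun x => condMean μ η (closedBall x (q:ℝ))) ⁻¹' C := by
        ext x
        simp only [mem_setOf_eq, mem_union, mem_compl_iff, mem_preimage]
        constructor
        · intro h
          by_cases hqR : (q:ℝ) ≤ probRadius μ x p
          · exact Or.inr (h hq hqR)
          · exact Or.inl hqR
        · rintro (h | h) _ hqR
          · exact absurd hqR h
          · exact h
      rw [this]
      apply MeasurableSet.union
      · exact (hRmeas measurableSet_Ici).compl
      · exact (measurable_condMean_rho hmeas hrange
          (fun x x' => le_add_of_nonneg_right dist_nonneg)) hC.measurableSet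
    · have : {x : X | 0 < (q:ℝ) → (q:ℝ) ≤ probRadius μ x p →
          condMean μ η (closedBall x (q:ℝ)) ∈ C} = Set.univ := by
        ext x
        simp only [mem_setOf_eq, mem_univ, iff_true]
        intro h
        exact absurd h hq
      rw [this]
      exact MeasurableSet.univ
  · have : {x : X | 0 < probRadius μ x p →
        condMean μ η (closedBall x (probRadius μ x p)) ∈ C}
      = {x : X | 0 < probRadius μ x p}ᶜ
        ∪ (fun x => condMean μ η (closedBall x (probRadius μ x p))) ⁻¹' C := by
      ext x
      simp only [mem_setOf_eq, mem_union, mem_compl_iff, mem_preimage]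
      constructor
      · intro h
        by_cases hR : 0 < probRadius μ x p
        · exact Or.inr (h hR)
        · exact Or.inl hR
      · rintro (h | h) hR
        · exact absurd hR h
        · exact h
    rw [this]
    apply MeasurableSet.union
    · exact (hRmeas measurableSet_Ioi).compl
    · exact (measurable_condMean_rho hmeas hrange (pr_lip hp0 hp1)) hC.measurableSet

end Main

section Main2
variable [IsProbabilityMeasure μ] [μ.IsOpenPosMeasure]

lemma measurable_effIntPlus (hmeas : Measurable η) (hrange : ∀ x, η x ∈ Set.Icc (0:ℝ) 1)
    {p Δ : ℝ} (hp0 : 0 < p) (hp1 : p < 1) :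
    MeasurableSet (effIntPlus μ η p Δ) := by
  have : effIntPlus μ η p Δ = {x | 1/2 < η x} ∩ {x | ∀ r, 0 < r → r ≤ probRadius μ x p →
      condMean μ η (closedBall x r) ∈ Ici (Δ + 1/2)} := by
    ext x
    simp only [effIntPlus, mem_setOf_eq, mem_inter_iff, mem_Ici]
    constructor
    · rintro ⟨h1, h2⟩
      exact ⟨h1, fun r hr hrR => by have := h2 r hr hrR; linarith⟩
    · rintro ⟨h1, h2⟩
      exact ⟨h1, fun r hr hrR => by have := h2 r hr hrR; linarith⟩
  rw [this]
  exact (hmeas measurableSet_Ioi).inter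
    (measurable_effSet hmeas hrange hp0 hp1 isClosed_Ici)

lemma measurable_effIntMinus (hmeas : Measurable η) (hrange : ∀ x, η x ∈ Set.Icc (0:ℝ) 1)
    {p Δ : ℝ} (hp0 : 0 < p) (hp1 : p < 1) :
    MeasurableSet (effIntMinus μ η p Δ) := by
  have : effIntMinus μ η p Δ = {x | η x < 1/2} ∩ {x | ∀ r, 0 < r → r ≤ probRadius μ x p →
      condMean μ η (closedBall x r) ∈ Iic (1/2 - Δ)} := by
    ext x
    simp only [effIntMinus, mem_setOf_eq, mem_inter_iff, mem_Iic]
    constructor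
    · rintro ⟨h1, h2⟩
      exact ⟨h1, fun r hr hrR => by have := h2 r hr hrR; linarith⟩
    · rintro ⟨h1, h2⟩
      exact ⟨h1, fun r hr hrR => by have := h2 r hr hrR; linarith⟩
  rw [this]
  exact (hmeas measurableSet_Iio).inter
    (measurable_effSet hmeas hrange hp0 hp1 isClosed_Iic)

end Main2

end Aux

/-- If the Lebesgue differentiation conclusion holds μ-a.e. and p_m ↓ 0, Δ_m ↓ 0, then the
measure of the effective boundary minus the decision boundary tends to 0. -/
theorem stmt13 {X : Type*} [MetricSpace X] [MeasurableSpace X] [BorelSpace X]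
    (μ : Measure X) [IsProbabilityMeasure μ] [μ.IsOpenPosMeasure]
    (η : X → ℝ) (hmeas : Measurable η) (hrange : ∀ x, η x ∈ Set.Icc (0:ℝ) 1)
    (hnull : μ {x | ¬ Filter.Tendsto (fun r => condMean μ η (closedBall x r))
        (nhdsWithin 0 (Set.Ioi 0)) (nhds (η x))} = 0)
    (p Δ : ℕ → ℝ) (hpanti : Antitone p) (hΔanti : Antitone Δ)
    (hp : ∀ m, p m ∈ Set.Ioo (0:ℝ) 1) (hΔ : ∀ m, 0 < Δ m)
    (hp0 : Filter.Tendsto p Filter.atTop (nhds 0))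
    (hΔ0 : Filter.Tendsto Δ Filter.atTop (nhds 0)) :
    Filter.Tendsto (fun m => μ (effBoundary μ η (p m) (Δ m) \ {x | η x = 1/2}))
      Filter.atTop (nhds 0) := by
  classical
  set A : ℕ → Set X := fun m => effBoundary μ η (p m) (Δ m) \ {x | η x = 1/2} with hA
  have hmeasA : ∀ m, MeasurableSet (A m) := by
    intro m
    apply MeasurableSet.diff
    · exact ((measurable_effIntPlus hmeas hrange (hp m).1 (hp m).2).union
        (measurable_effIntMinus hmeas hrange (hp m).1 (hp m).2)).compl
    · exact hmeas (measurableSet_singleton (1/2))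
  have hanti : Antitone A := by
    intro m n hmn
    apply diff_subset_diff_left
    apply compl_subset_compl.2
    apply union_subset_union
    · rintro x ⟨hη, hcond⟩
      refine ⟨hη, fun r hr hrR => ?_⟩
      have hRle : probRadius μ x (p n) ≤ probRadius μ x (p m) :=
        pr_mono (hp n).1 (hpanti hmn) (hp m).2
      exact le_trans (hΔanti hmn) (hcond r hr (le_trans hrR hRle))
    · rintro x ⟨hη, hcond⟩
      refine ⟨hη, fun r hr hrR => ?_⟩
      have hRle : probRadius μ x (p n) ≤ probRadius μ x (p m) :=
        pr_mono (hp n).1 (hpanti hmn) (hp m).2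
      exact le_trans (hΔanti hmn) (hcond r hr (le_trans hrR hRle))
  have hnullsub : (⋂ m, A m) ⊆ {x | ¬ Filter.Tendsto (fun r => condMean μ η (closedBall x r))
      (nhdsWithin 0 (Set.Ioi 0)) (nhds (η x))} := by
    intro x hx
    simp only [mem_iInter] at hx
    by_contra hT
    rw [mem_setOf_eq, not_not] at hT
    have hxne : η x ≠ 1/2 := (hx 0).2
    have hbd : ∀ m, x ∉ effIntPlus μ η (p m) (Δ m) ∪ effIntMinus μ η (p m) (Δ m) :=
      fun m => (hx m).1
    rcases lt_or_gt_of_ne hxne with hlt | hgt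
    · -- η x < 1/2
      set c := (1/2 - η x)/2 with hc
      have hcpos : 0 < c := by rw [hc]; linarith
      obtain ⟨δ, hδpos, hδprop⟩ := Metric.tendsto_nhdsWithin_nhds.1 hT c hcpos
      have hc' : 0 < (μ (closedBall x (δ/2))).toReal :=
        ENNReal.toReal_pos (ne_of_gt (measure_closedBall_pos μ x (by linarith)))
          (measure_ne_top _ _)
      obtain ⟨m₁, hm₁⟩ := (hp0.eventually_lt_const hc').exists
      obtain ⟨m₂, hm₂⟩ := (hΔ0.eventually_lt_const hcpos).exists
      set m := max m₁ m₂ with hm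
      have hpm : p m < (μ (closedBall x (δ/2))).toReal :=
        lt_of_le_of_lt (hpanti (le_max_left m₁ m₂)) hm₁
      have hΔm : Δ m < c := lt_of_le_of_lt (hΔanti (le_max_right m₁ m₂)) hm₂
      have hR : probRadius μ x (p m) ≤ δ/2 := pr_le (hp m).1 (le_of_lt hpm)
      apply hbd m
      right
      refine ⟨hlt, fun r hr hrR => ?_⟩
      have hrδ : dist r (0:ℝ) < δ := by
        rw [Real.dist_eq, sub_zero, abs_of_pos hr]
        linarith
      have hdist := hδprop (mem_Ioi.2 hr) hrδ
      rw [Real.dist_eq, abs_lt] at hdist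
      rw [hc] at hΔm
      linarith [hdist.2]
    · -- η x > 1/2
      set c := (η x - 1/2)/2 with hc
      have hcpos : 0 < c := by rw [hc]; linarith
      obtain ⟨δ, hδpos, hδprop⟩ := Metric.tendsto_nhdsWithin_nhds.1 hT c hcpos
      have hc' : 0 < (μ (closedBall x (δ/2))).toReal :=
        ENNReal.toReal_pos (ne_of_gt (measure_closedBall_pos μ x (by linarith)))
          (measure_ne_top _ _)
      obtain ⟨m₁, hm₁⟩ := (hp0.eventually_lt_const hc').exists
      obtain ⟨m₂, hm₂⟩ := (hΔ0.eventually_lt_const hcpos).exists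
      set m := max m₁ m₂ with hm
      have hpm : p m < (μ (closedBall x (δ/2))).toReal :=
        lt_of_le_of_lt (hpanti (le_max_left m₁ m₂)) hm₁
      have hΔm : Δ m < c := lt_of_le_of_lt (hΔanti (le_max_right m₁ m₂)) hm₂
      have hR : probRadius μ x (p m) ≤ δ/2 := pr_le (hp m).1 (le_of_lt hpm)
      apply hbd m
      left
      refine ⟨hgt, fun r hr hrR => ?_⟩
      have hrδ : dist r (0:ℝ) < δ := by
        rw [Real.dist_eq, sub_zero, abs_of_pos hr]
        linarith
      have hdist := hδprop (mem_Ioi.2 hr) hrδ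
      rw [Real.dist_eq, abs_lt] at hdist
      rw [hc] at hΔm
      linarith [hdist.1]
  have h0 : μ (⋂ m, A m) = 0 := measure_mono_null hnullsub hnull
  have hlim := tendsto_measure_iInter_atTop (μ := μ)
    (fun m => (hmeasA m).nullMeasurableSet) hanti ⟨0, measure_ne_top _ _⟩
  rw [h0] at hlim
  exact hlim
end
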